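/- arXiv:1704.07807 — 2 statements merged into one kernel-verified Lean document; each statement's English description precedes it below -/
import Mathlib

section
/- (Theorem 3.8, o(1/k) rate.) Suppose each step-size satisfies α_i < 2/L_i, there exists a fixed point (d*, z*) of the NIDS iteration with d* ∈ range(I − W), and {(x^k, d^k, z^k)}_{k≥1} is generated by the NIDS iteration from any (d^1, z^1) with d^1 ∈ range(I − W). Then k · (‖z^k − z^{k+1}‖²_{Λ⁻¹} + ‖d^k − d^{k+1}‖²_M) → 0 as k → ∞; that is, ‖z^k − z^{k+1}‖²_{Λ⁻¹} + ‖d^k − d^{k+1}‖²_M = o(1/(k+1)). -/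
open Matrix Filter Topology

noncomputable section

/-- Trace inner product `⟨x, y⟩ = tr(xᵀ y)` on `n × p` real matrices. -/
def iprod {n p : ℕ} (x y : Matrix (Fin n) (Fin p) ℝ) : ℝ := (xᵀ * y).trace

/-- Weighted inner product `⟨x, y⟩_Q = tr(xᵀ Q y)`. -/
def iprodQ {n p : ℕ} (Q : Matrix (Fin n) (Fin n) ℝ) (x y : Matrix (Fin n) (Fin p) ℝ) : ℝ :=
  (xᵀ * Q * y).trace

/-- Weighted squared (semi)norm `‖x‖_Q² = tr(xᵀ Q x)`. -/
def nsq {n p : ℕ} (Q : Matrix (Fin n) (Fin n) ℝ) (x : Matrix (Fin n) (Fin p) ℝ) : ℝ :=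
  iprodQ Q x x

/-- `∇s(x)`: the matrix whose `i`-th row is the gradient field `g i` applied to the `i`-th
row of `x`. -/
def gradS {n p : ℕ} (g : Fin n → EuclideanSpace ℝ (Fin p) → EuclideanSpace ℝ (Fin p))
    (x : Matrix (Fin n) (Fin p) ℝ) : Matrix (Fin n) (Fin p) ℝ :=
  Matrix.of fun i => WithLp.equiv 2 (Fin p → ℝ) (g i ((WithLp.equiv 2 (Fin p → ℝ)).symm (x i)))

/-- `x ∈ range(A)`, i.e. `x = A y` for some `y ∈ ℝ^{n×p}`. -/
def InRange {n p : ℕ} (A : Matrix (Fin n) (Fin n) ℝ) (x : Matrix (Fin n) (Fin p) ℝ) : Prop :=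
  ∃ y : Matrix (Fin n) (Fin p) ℝ, x = A * y

/-- `B` is the Moore–Penrose pseudoinverse of `A`. -/
def IsMoorePenrose {n : ℕ} (A B : Matrix (Fin n) (Fin n) ℝ) : Prop :=
  A * B * A = A ∧ B * A * B = B ∧ (A * B)ᵀ = A * B ∧ (B * A)ᵀ = B * A

/-- `r(x) = Σᵢ rᵢ(xᵢ)` where `xᵢ` is the `i`-th row of `x`. -/
def rsum {n p : ℕ} (r : Fin n → (Fin p → ℝ) → ℝ) (x : Matrix (Fin n) (Fin p) ℝ) : ℝ :=
  ∑ i, r i (x i)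

/-- `q ∈ ∂r(x)`: subgradient of `rsum r` at `x` w.r.t. the trace inner product. -/
def IsSubgrad {n p : ℕ} (r : Fin n → (Fin p → ℝ) → ℝ) (x q : Matrix (Fin n) (Fin p) ℝ) : Prop :=
  ∀ y : Matrix (Fin n) (Fin p) ℝ, rsum r x + iprod q (y - x) ≤ rsum r y

/-- `t` is an eigenvalue of the real matrix `A`. -/
def IsEig {n : ℕ} (A : Matrix (Fin n) (Fin n) ℝ) (t : ℝ) : Prop :=
  ∃ v : Fin n → ℝ, v ≠ 0 ∧ A *ᵥ v = t • v

/-- The mixing matrix assumption: symmetry, null space of `I - W` is the span of the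
all-ones vector, and `2I ≽ W + I ≻ 0`. -/
def IsMixing {n : ℕ} (W : Matrix (Fin n) (Fin n) ℝ) : Prop :=
  Wᵀ = W ∧ (∀ v : Fin n → ℝ, (1 - W) *ᵥ v = 0 ↔ ∃ t : ℝ, v = fun _ => t) ∧
    (W + 1).PosDef ∧ ((2 : ℝ) • (1 : Matrix (Fin n) (Fin n) ℝ) - (W + 1)).PosSemidef

/-- `x` is a minimizer over `ℝ^{n×p}` of `u ↦ r(u) + ½‖u − z‖²_{Λ⁻¹}` where `Λ = diag α`. -/
def ProxMin {n p : ℕ} (r : Fin n → (Fin p → ℝ) → ℝ) (α : Fin n → ℝ)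
    (z x : Matrix (Fin n) (Fin p) ℝ) : Prop :=
  ∀ u : Matrix (Fin n) (Fin p) ℝ,
    rsum r x + 1 / 2 * nsq (Matrix.diagonal fun i => (α i)⁻¹) (x - z) ≤
      rsum r u + 1 / 2 * nsq (Matrix.diagonal fun i => (α i)⁻¹) (u - z)

/-- `(d, z)` is a fixed point of the NIDS iteration. -/
def NIDSFixed {n p : ℕ} (W : Matrix (Fin n) (Fin n) ℝ) (α : Fin n → ℝ) (c : ℝ)
    (g : Fin n → EuclideanSpace ℝ (Fin p) → EuclideanSpace ℝ (Fin p))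
    (r : Fin n → (Fin p → ℝ) → ℝ) (d z : Matrix (Fin n) (Fin p) ℝ) : Prop :=
  ∃ x : Matrix (Fin n) (Fin p) ℝ, ProxMin r α z x ∧
    d = d + c • ((1 - W) *
      ((2 : ℝ) • x - z - Matrix.diagonal α * gradS g x - Matrix.diagonal α * d)) ∧
    z = x - Matrix.diagonal α * gradS g x - Matrix.diagonal α * d

end

/-!
Write `S = I - W`, `Λ = diag α`, `M = c⁻¹ B - Λ` and `Γ = Λ⁻¹ - diag (L / 2)`; `Γ` is positive
definite because `αᵢ < 2 / Lᵢ`. On `range S` the form of `M` is symmetric, since `S B S = S`, and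
positive semidefinite: Cauchy–Schwarz for the form of `S` and `I - c Λ^{1/2} S Λ^{1/2} ≽ 0` give
`c ‖S y‖²_Λ ≤ ‖y‖²_S`.

For two NIDS steps `(d, z) ↦ (d₁, z₁)` and `(d', z') ↦ (d₁', z₁')` with `d - d'`, `d₁ - d₁'` in
`range S`, polarization turns the change of `‖z - z'‖²_{Λ⁻¹} + ‖d - d'‖²_M` into inner products
controlled by the monotonicity of `∂r` (read off the proximal step) and the Baillon–Haddad
cocoercivity of `∇s`; what is left is a decrease by at least
`‖(d - d₁) - (d' - d₁')‖²_M + ‖(z - z₁) - (z' - z₁')‖²_Γ`.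
Against the fixed point this is Fejér monotonicity, so the residuals
`‖zᵏ - zᵏ⁺¹‖²_{Λ⁻¹} + ‖dᵏ - dᵏ⁺¹‖²_M` are summable; against the next step it shows that they are
nonincreasing. A nonnegative, nonincreasing, summable sequence is `o(1 / k)`.
-/

section ConvexAnalysis

variable {E : Type*} [NormedAddCommGroup E] [InnerProductSpace ℝ E]

theorem two_inner_le_inv_mul_add {L : ℝ} (hL : 0 < L) (u v : E) :
    2 * inner ℝ u v ≤ 2 * L⁻¹ * ‖u‖ ^ 2 + L / 2 * ‖v‖ ^ 2 := by
  have h := real_inner_le_norm u v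
  have hsq : 0 ≤ L⁻¹ / 2 * (2 * ‖u‖ - L * ‖v‖) ^ 2 := by positivity
  have e : L⁻¹ / 2 * (2 * ‖u‖ - L * ‖v‖) ^ 2
      = 2 * L⁻¹ * ‖u‖ ^ 2 - 2 * ‖u‖ * ‖v‖ + L / 2 * ‖v‖ ^ 2 := by
    field_simp; ring
  linarith

variable [CompleteSpace E] {f : E → ℝ} {f' : E → E}

theorem HasGradientAt.comp_lineMap {x y : E} {t : ℝ} {v : E}
    (hf : HasGradientAt f v (AffineMap.lineMap x y t)) :
    HasDerivAt (fun t => f (AffineMap.lineMap x y t)) (inner ℝ v (y - x)) t := by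
  simpa [Function.comp_def] using
    hf.hasFDerivAt.comp_hasDerivAt t (AffineMap.hasDerivAt_lineMap (x := t))

theorem ConvexOn.add_inner_gradient_le (hconv : ConvexOn ℝ Set.univ f)
    (hf : ∀ v, HasGradientAt f (f' v) v) (x y : E) :
    f x + inner ℝ (f' x) (y - x) ≤ f y := by
  have hφ : ConvexOn ℝ Set.univ (fun t : ℝ => f (AffineMap.lineMap x y t)) :=
    hconv.comp_affineMap (AffineMap.lineMap x y)
  have := hφ.le_slope_of_hasDerivAt (Set.mem_univ 0) (Set.mem_univ 1) one_pos
    (by simpa using (hf _).comp_lineMap (t := 0))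
  simp only [slope_def_field, AffineMap.lineMap_apply_zero, AffineMap.lineMap_apply_one] at this
  linarith

theorem le_add_inner_gradient_add_sq (hf : ∀ v, HasGradientAt f (f' v) v) {L : ℝ}
    (hlip : ∀ v w, ‖f' v - f' w‖ ≤ L * ‖v - w‖) (x y : E) :
    f y ≤ f x + inner ℝ (f' x) (y - x) + L / 2 * ‖y - x‖ ^ 2 := by
  set F : ℝ → ℝ := fun t => f (AffineMap.lineMap x y t) - t * inner ℝ (f' x) (y - x)
    - t ^ 2 * (L / 2 * ‖y - x‖ ^ 2)
  have hF : ∀ t, HasDerivAt F (inner ℝ (f' (AffineMap.lineMap x y t)) (y - x)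
      - inner ℝ (f' x) (y - x) - 2 * t * (L / 2 * ‖y - x‖ ^ 2)) t := fun t => by
    refine (((hf _).comp_lineMap).sub ?_).sub ?_
    · simpa using (hasDerivAt_id t).mul_const (inner ℝ (f' x) (y - x))
    · simpa using (hasDerivAt_pow 2 t).mul_const (L / 2 * ‖y - x‖ ^ 2)
  have hanti : AntitoneOn F (Set.Icc 0 1) := by
    refine antitoneOn_of_deriv_nonpos (convex_Icc 0 1)
      (fun t _ => (hF t).continuousAt.continuousWithinAt)
      (fun t _ => (hF t).differentiableAt.differentiableWithinAt) fun t ht => ?_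
    rw [interior_Icc] at ht
    have hgrowth :
        inner ℝ (f' (AffineMap.lineMap x y t) - f' x) (y - x) ≤ L * t * ‖y - x‖ ^ 2 :=
      calc _ ≤ ‖f' (AffineMap.lineMap x y t) - f' x‖ * ‖y - x‖ := real_inner_le_norm _ _
        _ ≤ L * ‖AffineMap.lineMap x y t - x‖ * ‖y - x‖ := by gcongr; exact hlip _ _
        _ = L * t * ‖y - x‖ ^ 2 := by
          rw [AffineMap.lineMap_apply_module', add_sub_cancel_right, norm_smul,
            Real.norm_of_nonneg ht.1.le]
          ring
    rw [(hF t).deriv, ← inner_sub_left]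
    linarith
  have := hanti (by simp) (by simp) zero_le_one
  simp only [F, AffineMap.lineMap_apply_zero, AffineMap.lineMap_apply_one] at this
  linarith

theorem inv_mul_norm_sq_le_inner_gradient (hconv : ConvexOn ℝ Set.univ f)
    (hf : ∀ v, HasGradientAt f (f' v) v) {L : ℝ} (hL : 0 < L)
    (hlip : ∀ v w, ‖f' v - f' w‖ ≤ L * ‖v - w‖) (x y : E) :
    L⁻¹ * ‖f' x - f' y‖ ^ 2 ≤ inner ℝ (f' x - f' y) (x - y) := by
  -- evaluate at the gradient step `w = b - L⁻¹ (f' b - f' a)`: convexity from `a`, descent from `b`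
  have key : ∀ a b : E, f a + inner ℝ (f' a) (b - a) + L⁻¹ / 2 * ‖f' b - f' a‖ ^ 2 ≤ f b := by
    intro a b
    set w := b - L⁻¹ • (f' b - f' a)
    have h1 := hconv.add_inner_gradient_le hf a w
    have h2 := le_add_inner_gradient_add_sq hf hlip b w
    have e1 : w - a = (b - a) - L⁻¹ • (f' b - f' a) := by simp only [w]; abel
    have e2 : w - b = -(L⁻¹ • (f' b - f' a)) := by simp only [w]; abel
    rw [e1, inner_sub_right, inner_smul_right] at h1
    rw [e2, norm_neg, norm_smul, inner_neg_right, inner_smul_right,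
      Real.norm_of_nonneg (by positivity)] at h2
    have e3 : inner ℝ (f' b) (f' b - f' a) - inner ℝ (f' a) (f' b - f' a)
        = ‖f' b - f' a‖ ^ 2 := by
      rw [← inner_sub_left, real_inner_self_eq_norm_sq]
    have e4 : L / 2 * (L⁻¹ * ‖f' b - f' a‖) ^ 2 = L⁻¹ / 2 * ‖f' b - f' a‖ ^ 2 := by
      field_simp
    have e5 := congrArg (L⁻¹ * ·) e3
    simp only [mul_sub] at e5
    linarith
  have h1 := key x y
  have h2 := key y x
  rw [norm_sub_rev] at h1
  have e : inner ℝ (f' x) (y - x) + inner ℝ (f' y) (x - y)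
      = -inner ℝ (f' x - f' y) (x - y) := by
    rw [inner_sub_left, ← neg_sub x y, inner_neg_right]; ring
  linarith

theorem two_inner_gradient_sub_le (hconv : ConvexOn ℝ Set.univ f)
    (hf : ∀ v, HasGradientAt f (f' v) v) {L : ℝ} (hL : 0 < L)
    (hlip : ∀ v w, ‖f' v - f' w‖ ≤ L * ‖v - w‖) (x y v : E) :
    2 * inner ℝ (f' x - f' y) v - 2 * inner ℝ (x - y) (f' x - f' y) ≤ L / 2 * ‖v‖ ^ 2 := by
  have h₁ := inv_mul_norm_sq_le_inner_gradient hconv hf hL hlip x y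
  have h₂ := two_inner_le_inv_mul_add hL (f' x - f' y) v
  rw [real_inner_comm (f' x - f' y) (x - y)]
  linarith

end ConvexAnalysis

theorem nonneg_of_forall_add_mul_nonneg {a b : ℝ}
    (h : ∀ t ∈ Set.Ioo (0 : ℝ) 1, 0 ≤ a + t * b) : 0 ≤ a := by
  have hlim : Tendsto (fun t : ℝ => a + t * b) (𝓝[>] 0) (𝓝 a) :=
    (Continuous.tendsto' (by fun_prop) 0 a (by simp)).mono_left nhdsWithin_le_nhds
  exact ge_of_tendsto hlim (eventually_of_mem (Ioo_mem_nhdsGT one_pos) h)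

theorem summable_of_le_sub_succ {b E : ℕ → ℝ} (hb : ∀ k, 0 ≤ b k) (hE : ∀ k, 0 ≤ E k)
    (h : ∀ k, b k ≤ E k - E (k + 1)) : Summable b :=
  summable_of_sum_range_le hb fun K =>
    calc ∑ k ∈ Finset.range K, b k ≤ ∑ k ∈ Finset.range K, (E k - E (k + 1)) :=
          Finset.sum_le_sum fun k _ => h k
      _ = E 0 - E K := Finset.sum_range_sub' E K
      _ ≤ E 0 := sub_le_self _ (hE K)

theorem tendsto_succ_mul_of_antitone_of_summable {b : ℕ → ℝ} (hb : ∀ k, 0 ≤ b k)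
    (hanti : Antitone b) (hsum : Summable b) :
    Tendsto (fun k : ℕ => ((k : ℝ) + 1) * b k) atTop (𝓝 0) := by
  -- the `k - k / 2 + 1` terms `b (k / 2), …, b k` all dominate `b k`
  have htail : Tendsto (fun k => 2 * ∑' i, b (i + k / 2)) atTop (𝓝 0) := by
    simpa using
      ((tendsto_sum_nat_add b).comp (Nat.tendsto_div_const_atTop two_ne_zero)).const_mul 2
  refine squeeze_zero (fun k => by have := hb k; positivity) (fun k => ?_) htail
  have hcard : (k : ℝ) + 1 ≤ 2 * ((k - k / 2 + 1 : ℕ) : ℝ) := by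
    exact_mod_cast (by omega : k + 1 ≤ 2 * (k - k / 2 + 1))
  have hblock : ((k - k / 2 + 1 : ℕ) : ℝ) * b k
      ≤ ∑ i ∈ Finset.range (k - k / 2 + 1), b (i + k / 2) := by
    simpa using Finset.card_nsmul_le_sum (Finset.range (k - k / 2 + 1))
      (fun i => b (i + k / 2)) (b k) fun i hi => hanti (by simp at hi; omega)
  have htsum : ∑ i ∈ Finset.range (k - k / 2 + 1), b (i + k / 2) ≤ ∑' i, b (i + k / 2) :=
    ((summable_nat_add_iff (k / 2)).mpr hsum).sum_le_tsum _ fun i _ => hb _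
  nlinarith [hb k]

section MatrixInner

variable {n p : ℕ}

theorem iprod_comm (x y : Matrix (Fin n) (Fin p) ℝ) : iprod x y = iprod y x := by
  rw [iprod, ← trace_transpose, transpose_mul, transpose_transpose, iprod]

theorem iprod_add_left (x y w : Matrix (Fin n) (Fin p) ℝ) :
    iprod (x + y) w = iprod x w + iprod y w := by
  simp only [iprod, transpose_add, Matrix.add_mul, trace_add]

theorem iprod_add_right (x y w : Matrix (Fin n) (Fin p) ℝ) :
    iprod w (x + y) = iprod w x + iprod w y := by
  simp only [iprod, Matrix.mul_add, trace_add]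

theorem iprod_sub_left (x y w : Matrix (Fin n) (Fin p) ℝ) :
    iprod (x - y) w = iprod x w - iprod y w := by
  simp only [iprod, transpose_sub, Matrix.sub_mul, trace_sub]

theorem iprod_sub_right (x y w : Matrix (Fin n) (Fin p) ℝ) :
    iprod w (x - y) = iprod w x - iprod w y := by
  simp only [iprod, Matrix.mul_sub, trace_sub]

theorem iprod_neg_left (x y : Matrix (Fin n) (Fin p) ℝ) : iprod (-x) y = -iprod x y := by
  simp only [iprod, transpose_neg, Matrix.neg_mul, trace_neg]

theorem iprod_neg_right (x y : Matrix (Fin n) (Fin p) ℝ) : iprod x (-y) = -iprod x y := by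
  simp only [iprod, Matrix.mul_neg, trace_neg]

theorem iprod_smul_left (t : ℝ) (x y : Matrix (Fin n) (Fin p) ℝ) :
    iprod (t • x) y = t * iprod x y := by
  simp only [iprod, transpose_smul, Matrix.smul_mul, trace_smul, smul_eq_mul]

theorem iprod_smul_right (t : ℝ) (x y : Matrix (Fin n) (Fin p) ℝ) :
    iprod x (t • y) = t * iprod x y := by
  simp only [iprod, Matrix.mul_smul, trace_smul, smul_eq_mul]

theorem iprod_mul_left (A : Matrix (Fin n) (Fin n) ℝ) (x y : Matrix (Fin n) (Fin p) ℝ) :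
    iprod (A * x) y = iprod x (Aᵀ * y) := by
  rw [iprod, iprod, transpose_mul, Matrix.mul_assoc]

theorem iprod_mul_left_of_transpose_eq {Q : Matrix (Fin n) (Fin n) ℝ} (hQ : Qᵀ = Q)
    (x y : Matrix (Fin n) (Fin p) ℝ) : iprod (Q * x) y = iprod x (Q * y) := by
  rw [iprod_mul_left, hQ]

theorem iprod_mul_comm_of_transpose_eq {Q : Matrix (Fin n) (Fin n) ℝ} (hQ : Qᵀ = Q)
    (x y : Matrix (Fin n) (Fin p) ℝ) : iprod x (Q * y) = iprod y (Q * x) := by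
  rw [iprod_comm, iprod_mul_left_of_transpose_eq hQ]

theorem iprod_eq_sum_inner (x y : Matrix (Fin n) (Fin p) ℝ) :
    iprod x y = ∑ i, inner ℝ (WithLp.toLp 2 (x i)) (WithLp.toLp 2 (y i)) := by
  simp only [iprod, trace, diag, mul_apply, transpose_apply, PiLp.inner_apply,
    RCLike.inner_apply, conj_trivial]
  rw [Finset.sum_comm]
  exact Finset.sum_congr rfl fun i _ => Finset.sum_congr rfl fun j _ => mul_comm _ _

theorem nsq_eq_iprod (Q : Matrix (Fin n) (Fin n) ℝ) (x : Matrix (Fin n) (Fin p) ℝ) :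
    nsq Q x = iprod x (Q * x) := by
  rw [nsq, iprodQ, iprod, Matrix.mul_assoc]

theorem nsq_add {Q : Matrix (Fin n) (Fin n) ℝ} {u v : Matrix (Fin n) (Fin p) ℝ}
    (h : iprod v (Q * u) = iprod u (Q * v)) :
    nsq Q (u + v) = nsq Q u + 2 * iprod u (Q * v) + nsq Q v := by
  simp only [nsq_eq_iprod, Matrix.mul_add, iprod_add_left, iprod_add_right, h]
  ring

theorem nsq_smul (Q : Matrix (Fin n) (Fin n) ℝ) (t : ℝ) (x : Matrix (Fin n) (Fin p) ℝ) :
    nsq Q (t • x) = t ^ 2 * nsq Q x := by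
  simp only [nsq_eq_iprod, Matrix.mul_smul, iprod_smul_left, iprod_smul_right]
  ring

theorem nsq_smul_left (t : ℝ) (Q : Matrix (Fin n) (Fin n) ℝ) (x : Matrix (Fin n) (Fin p) ℝ) :
    nsq (t • Q) x = t * nsq Q x := by
  rw [nsq_eq_iprod, nsq_eq_iprod, Matrix.smul_mul, iprod_smul_right]

theorem nsq_sub_left (Q Q' : Matrix (Fin n) (Fin n) ℝ) (x : Matrix (Fin n) (Fin p) ℝ) :
    nsq (Q - Q') x = nsq Q x - nsq Q' x := by
  simp only [nsq_eq_iprod, Matrix.sub_mul, iprod_sub_right]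

theorem diagonal_inv_mul_diagonal {w : Fin n → ℝ} (hw : ∀ i, w i ≠ 0) :
    (diagonal fun i => (w i)⁻¹) * diagonal w = 1 := by
  rw [diagonal_mul_diagonal, ← diagonal_one]
  exact congrArg diagonal (funext fun i => inv_mul_cancel₀ (hw i))

theorem diagonal_mul_diagonal_inv {w : Fin n → ℝ} (hw : ∀ i, w i ≠ 0) :
    diagonal w * (diagonal fun i => (w i)⁻¹) = 1 := by
  rw [diagonal_mul_diagonal, ← diagonal_one]
  exact congrArg diagonal (funext fun i => mul_inv_cancel₀ (hw i))

theorem nsq_diagonal (w : Fin n → ℝ) (x : Matrix (Fin n) (Fin p) ℝ) :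
    nsq (diagonal w) x = ∑ i, w i * ‖WithLp.toLp 2 (x i)‖ ^ 2 := by
  have hrow : ∀ i, (diagonal w * x) i = w i • x i := fun i => by
    ext j; simp [diagonal_mul]
  simp only [nsq_eq_iprod, iprod_eq_sum_inner, hrow, WithLp.toLp_smul, inner_smul_right,
    real_inner_self_eq_norm_sq]

theorem nsq_diagonal_nonneg {w : Fin n → ℝ} (hw : ∀ i, 0 ≤ w i)
    (x : Matrix (Fin n) (Fin p) ℝ) : 0 ≤ nsq (diagonal w) x := by
  rw [nsq_diagonal]
  exact Finset.sum_nonneg fun i _ => mul_nonneg (hw i) (sq_nonneg _)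

theorem exists_nsq_diagonal_le_mul (w : Fin n → ℝ) {w' : Fin n → ℝ} (hw' : ∀ i, 0 < w' i) :
    ∃ C, ∀ x : Matrix (Fin n) (Fin p) ℝ, nsq (diagonal w) x ≤ C * nsq (diagonal w') x := by
  obtain ⟨C, hC⟩ := Finite.exists_le fun i => w i / w' i
  refine ⟨C, fun x => ?_⟩
  rw [nsq_diagonal, nsq_diagonal, Finset.mul_sum]
  refine Finset.sum_le_sum fun i _ => ?_
  rw [← mul_assoc]
  have := (div_le_iff₀ (hw' i)).mp (hC i)
  gcongr

theorem nsq_nonneg_of_posSemidef {Q : Matrix (Fin n) (Fin n) ℝ} (hQ : Q.PosSemidef)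
    (x : Matrix (Fin n) (Fin p) ℝ) : 0 ≤ nsq Q x := by
  simpa [nsq, iprodQ, conjTranspose_eq_transpose_of_trivial] using
    (hQ.conjTranspose_mul_mul_same x).trace_nonneg

theorem iprod_mul_sq_le {Q : Matrix (Fin n) (Fin n) ℝ} (hQ : Q.PosSemidef) (hQt : Qᵀ = Q)
    (x y : Matrix (Fin n) (Fin p) ℝ) : iprod x (Q * y) ^ 2 ≤ nsq Q x * nsq Q y := by
  let β : LinearMap.BilinForm ℝ (Matrix (Fin n) (Fin p) ℝ) :=
    LinearMap.mk₂ ℝ (fun x y => iprod x (Q * y)) (fun _ _ _ => iprod_add_left _ _ _)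
      (fun _ _ _ => iprod_smul_left _ _ _)
      (fun _ _ _ => by rw [Matrix.mul_add, iprod_add_right])
      (fun _ _ _ => by rw [Matrix.mul_smul, iprod_smul_right]; rfl)
  have := β.apply_mul_apply_le_of_forall_zero_le
    (fun x => (nsq_eq_iprod Q x).le.trans' (nsq_nonneg_of_posSemidef hQ x)) x y
  simpa [β, sq, ← nsq_eq_iprod, iprod_mul_comm_of_transpose_eq hQt y x] using this

end MatrixInner

section Prox

variable {n p : ℕ} {r : Fin n → (Fin p → ℝ) → ℝ}

theorem convexOn_rsum (hr : ∀ i, ConvexOn ℝ Set.univ (r i)) : ConvexOn ℝ Set.univ (rsum r) := by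
  refine ⟨convex_univ, fun x _ y _ a b ha hb hab => ?_⟩
  simp only [rsum, smul_eq_mul, Finset.mul_sum, ← Finset.sum_add_distrib]
  exact Finset.sum_le_sum fun i _ =>
    (hr i).2 (Set.mem_univ (x i)) (Set.mem_univ (y i)) ha hb hab

theorem ProxMin.isSubgrad (hr : ∀ i, ConvexOn ℝ Set.univ (r i)) {α : Fin n → ℝ}
    {z x : Matrix (Fin n) (Fin p) ℝ} (h : ProxMin r α z x) :
    IsSubgrad r x (diagonal (fun i => (α i)⁻¹) * (z - x)) := by
  intro u
  set P : Matrix (Fin n) (Fin n) ℝ := diagonal fun i => (α i)⁻¹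
  have hP : Pᵀ = P := diagonal_transpose _
  have hlin : iprod (P * (z - x)) (u - x) = -iprod (x - z) (P * (u - x)) := by
    rw [iprod_mul_left, hP, ← neg_sub x z, iprod_neg_left]
  -- compare `x` with the competitor `(1 - t) x + t u` and let `t → 0`
  refine sub_nonneg.mp
    (nonneg_of_forall_add_mul_nonneg (b := nsq P (u - x) / 2) fun t ht => ?_)
  have hmin := h ((1 - t) • x + t • u)
  have hconv := (convexOn_rsum hr).2 (Set.mem_univ x) (Set.mem_univ u)
    (sub_nonneg.2 ht.2.le) ht.1.le (sub_add_cancel 1 t)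
  have hexp : nsq P ((1 - t) • x + t • u - z) = nsq P (x - z)
      + 2 * t * iprod (x - z) (P * (u - x)) + t ^ 2 * nsq P (u - x) := by
    rw [show (1 - t) • x + t • u - z = (x - z) + t • (u - x) by module,
      nsq_add (iprod_mul_comm_of_transpose_eq hP _ _), nsq_smul, Matrix.mul_smul,
      iprod_smul_right]
    ring
  simp only [smul_eq_mul] at hconv
  have key : 0 ≤ t * (rsum r u - rsum r x + iprod (x - z) (P * (u - x))
      + t * (nsq P (u - x) / 2)) := by nlinarith
  linarith [nonneg_of_mul_nonneg_right key ht.1]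

theorem IsSubgrad.iprod_sub_nonneg {x x' q q' : Matrix (Fin n) (Fin p) ℝ}
    (h : IsSubgrad r x q) (h' : IsSubgrad r x' q') : 0 ≤ iprod (q - q') (x - x') := by
  have h₁ := h x'
  have h₂ := h' x
  simp only [iprod_sub_left, iprod_sub_right] at *
  linarith

end Prox

section GeneralizedInverse

variable {n p : ℕ} {S B : Matrix (Fin n) (Fin n) ℝ}

theorem inRange_mul (S : Matrix (Fin n) (Fin n) ℝ) (y : Matrix (Fin n) (Fin p) ℝ) :
    InRange S (S * y) :=
  ⟨y, rfl⟩

theorem InRange.add {e f : Matrix (Fin n) (Fin p) ℝ} (he : InRange S e) (hf : InRange S f) :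
    InRange S (e + f) := by
  obtain ⟨u, rfl⟩ := he
  obtain ⟨v, rfl⟩ := hf
  exact ⟨u + v, (Matrix.mul_add S u v).symm⟩

theorem InRange.sub {e f : Matrix (Fin n) (Fin p) ℝ} (he : InRange S e) (hf : InRange S f) :
    InRange S (e - f) := by
  obtain ⟨u, rfl⟩ := he
  obtain ⟨v, rfl⟩ := hf
  exact ⟨u - v, (Matrix.mul_sub S u v).symm⟩

theorem InRange.iprod_mul_mul (hS : Sᵀ = S) (hSBS : S * B * S = S)
    {e : Matrix (Fin n) (Fin p) ℝ} (he : InRange S e) (t : Matrix (Fin n) (Fin p) ℝ) :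
    iprod e (B * (S * t)) = iprod e t := by
  obtain ⟨u, rfl⟩ := he
  rw [iprod_mul_left_of_transpose_eq hS, ← Matrix.mul_assoc, ← Matrix.mul_assoc, hSBS,
    iprod_mul_left_of_transpose_eq hS]

theorem InRange.iprod_mul_comm (hS : Sᵀ = S) (hSBS : S * B * S = S)
    {e f : Matrix (Fin n) (Fin p) ℝ} (he : InRange S e) (hf : InRange S f) :
    iprod e (B * f) = iprod f (B * e) := by
  obtain ⟨u, rfl⟩ := he
  obtain ⟨v, rfl⟩ := hf
  rw [(inRange_mul S u).iprod_mul_mul hS hSBS, (inRange_mul S v).iprod_mul_mul hS hSBS,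
    iprod_mul_left_of_transpose_eq hS, iprod_mul_left_of_transpose_eq hS,
    iprod_mul_comm_of_transpose_eq hS]

variable {α : Fin n → ℝ} {c : ℝ}

theorem InRange.iprod_metric_comm (hS : Sᵀ = S) (hSBS : S * B * S = S)
    {e f : Matrix (Fin n) (Fin p) ℝ} (he : InRange S e) (hf : InRange S f) :
    iprod e ((c⁻¹ • B - diagonal α) * f) = iprod f ((c⁻¹ • B - diagonal α) * e) := by
  simp only [Matrix.sub_mul, Matrix.smul_mul, iprod_sub_right, iprod_smul_right,
    he.iprod_mul_comm hS hSBS hf, iprod_mul_comm_of_transpose_eq (diagonal_transpose α) e f]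

theorem InRange.iprod_metric_of_eq (hS : Sᵀ = S) (hSBS : S * B * S = S) (hc : c ≠ 0)
    {e w Δ : Matrix (Fin n) (Fin p) ℝ} (he : InRange S e)
    (hΔ : Δ = c • (S * (w + diagonal α * Δ))) :
    iprod e ((c⁻¹ • B - diagonal α) * Δ) = iprod e w := by
  have hB : c⁻¹ * iprod e (B * Δ) = iprod e (w + diagonal α * Δ) := by
    conv_lhs => rw [hΔ]
    rw [Matrix.mul_smul, iprod_smul_right, he.iprod_mul_mul hS hSBS, inv_mul_cancel_left₀ hc]
  rw [Matrix.sub_mul, Matrix.smul_mul, iprod_sub_right, iprod_smul_right, hB, iprod_add_right,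
    add_sub_cancel_right]

theorem InRange.nsq_metric_nonneg (hS : Sᵀ = S) (hSpsd : S.PosSemidef) (hSBS : S * B * S = S)
    (hα : ∀ i, 0 < α i) (hc : 0 < c)
    (hcS : ((1 : Matrix (Fin n) (Fin n) ℝ) - c • ((diagonal fun i => Real.sqrt (α i)) * S *
      diagonal fun i => Real.sqrt (α i))).PosSemidef)
    {e : Matrix (Fin n) (Fin p) ℝ} (he : InRange S e) :
    0 ≤ nsq (c⁻¹ • B - diagonal α) e := by
  obtain ⟨y, rfl⟩ := he
  set P : Matrix (Fin n) (Fin n) ℝ := diagonal fun i => Real.sqrt (α i)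
  have hP : Pᵀ = P := diagonal_transpose _
  have hPP : P * (P * (S * y)) = diagonal α * (S * y) := by
    rw [← Matrix.mul_assoc, diagonal_mul_diagonal]
    exact congrArg (diagonal · * (S * y)) (funext fun i => Real.mul_self_sqrt (hα i).le)
  have hA : 0 ≤ nsq (diagonal α) (S * y) := nsq_diagonal_nonneg (fun i => (hα i).le) _
  have hN : 0 ≤ nsq S y := nsq_nonneg_of_posSemidef hSpsd y
  -- Cauchy–Schwarz for the form of `S`, tested against `Λ S y`
  have hcs : nsq (diagonal α) (S * y) ^ 2 ≤ nsq S y * nsq S (diagonal α * (S * y)) := by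
    have h := iprod_mul_sq_le hSpsd hS y (diagonal α * (S * y))
    rwa [← iprod_mul_left_of_transpose_eq hS, ← nsq_eq_iprod] at h
  have hcv : c * nsq S (diagonal α * (S * y)) ≤ nsq (diagonal α) (S * y) := by
    have h := nsq_nonneg_of_posSemidef hcS (P * (S * y))
    rw [nsq_sub_left, nsq_smul_left, nsq_eq_iprod, Matrix.one_mul] at h
    have hv : iprod (P * (S * y)) (P * (S * y)) = nsq (diagonal α) (S * y) := by
      rw [iprod_mul_left_of_transpose_eq hP, hPP, ← nsq_eq_iprod]
    have hPSP : nsq (P * S * P) (P * (S * y)) = nsq S (diagonal α * (S * y)) := by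
      rw [nsq_eq_iprod, nsq_eq_iprod, Matrix.mul_assoc, Matrix.mul_assoc,
        ← iprod_mul_left_of_transpose_eq hP, hPP]
    rw [hv, hPSP] at h
    linarith
  have hM : nsq (c⁻¹ • B - diagonal α) (S * y)
      = c⁻¹ * nsq S y - nsq (diagonal α) (S * y) := by
    rw [nsq_sub_left, nsq_eq_iprod, Matrix.smul_mul, iprod_smul_right,
      (inRange_mul S y).iprod_mul_mul hS hSBS, iprod_comm, ← nsq_eq_iprod]
  rw [hM, sub_nonneg, le_inv_mul_iff₀ hc]
  rcases hA.eq_or_lt with h0 | hpos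
  · rw [← h0, mul_zero]
    exact hN
  · exact le_of_mul_le_mul_right (by nlinarith) hpos

end GeneralizedInverse

section NIDS

variable {n p : ℕ} {W B : Matrix (Fin n) (Fin n) ℝ} {α L : Fin n → ℝ} {c : ℝ}
  {s : Fin n → EuclideanSpace ℝ (Fin p) → ℝ}
  {g : Fin n → EuclideanSpace ℝ (Fin p) → EuclideanSpace ℝ (Fin p)}
  {r : Fin n → (Fin p → ℝ) → ℝ}

theorem two_iprod_gradS_sub_le (hs : ∀ i, ConvexOn ℝ Set.univ (s i))
    (hg : ∀ i v, HasGradientAt (s i) (g i v) v) (hL : ∀ i, 0 < L i)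
    (hlip : ∀ i (v w : EuclideanSpace ℝ (Fin p)), ‖g i v - g i w‖ ≤ L i * ‖v - w‖)
    (x x' V : Matrix (Fin n) (Fin p) ℝ) :
    2 * iprod (gradS g x - gradS g x') V - 2 * iprod (x - x') (gradS g x - gradS g x')
      ≤ nsq (diagonal fun i => L i / 2) V := by
  rw [iprod_eq_sum_inner, iprod_eq_sum_inner, nsq_diagonal, Finset.mul_sum, Finset.mul_sum,
    ← Finset.sum_sub_distrib]
  have hrow : ∀ y : Matrix (Fin n) (Fin p) ℝ, ∀ i,
      WithLp.toLp 2 (gradS g y i) = g i (WithLp.toLp 2 (y i)) := fun _ _ => rfl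
  have hsub : ∀ y y' : Matrix (Fin n) (Fin p) ℝ, ∀ i,
      WithLp.toLp 2 ((y - y') i) = WithLp.toLp 2 (y i) - WithLp.toLp 2 (y' i) :=
    fun _ _ _ => rfl
  exact Finset.sum_le_sum fun i _ => by
    simpa only [hsub, hrow, sub_le_iff_le_add] using
      two_inner_gradient_sub_le (hs i) (hg i) (hL i) (hlip i)
      (WithLp.toLp 2 (x i)) (WithLp.toLp 2 (x' i)) (WithLp.toLp 2 (V i))

theorem nsq_energy_identity {Λ Λi M : Matrix (Fin n) (Fin n) ℝ} (hΛ : Λᵀ = Λ)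
    (hΛi : Λiᵀ = Λi) (hΛiΛ : Λi * Λ = 1) {X Y G Z Z₁ D D₁ : Matrix (Fin n) (Fin p) ℝ}
    (hZ : Z = X + Λ * Y) (hZ₁ : Z₁ = X - Λ * (G + D₁))
    (hM : iprod (D - D₁) (M * D₁) = iprod D₁ (M * (D - D₁)))
    (hD : iprod D₁ (M * (D₁ - D)) = iprod D₁ (X - Z + Z₁)) :
    nsq Λi Z + nsq M D = nsq Λi Z₁ + nsq M D₁ + nsq Λi (Z - Z₁) + nsq M (D - D₁)
      + 2 * iprod X Y + 2 * (iprod X G - iprod G (Z - Z₁)) := by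
  have hV : Z - Z₁ = Λ * (Y + G + D₁) := by
    rw [hZ, hZ₁]
    simp only [Matrix.mul_add]
    abel
  have hΛiV : Λi * (Z - Z₁) = Y + G + D₁ := by
    rw [hV, ← Matrix.mul_assoc, hΛiΛ, Matrix.one_mul]
  have hpolZ := nsq_add (u := Z₁) (v := Z - Z₁) (iprod_mul_comm_of_transpose_eq hΛi _ _)
  have hpolD := nsq_add (u := D₁) (v := D - D₁) hM
  rw [add_sub_cancel] at hpolZ hpolD
  have hcross : iprod Z₁ (Y + G + D₁) = iprod X (Y + G + D₁) - iprod (G + D₁) (Z - Z₁) := by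
    rw [hV, hZ₁, iprod_sub_left, iprod_mul_left, hΛ]
  have hD' : iprod D₁ (M * (D - D₁)) = -iprod D₁ (X - Z + Z₁) := by
    rw [← neg_sub D₁ D, Matrix.mul_neg, iprod_neg_right, hD]
  rw [hD'] at hpolD
  rw [hΛiV, hcross] at hpolZ
  simp only [iprod_add_left, iprod_add_right, iprod_sub_right] at hpolZ hpolD ⊢
  linarith [iprod_comm X D₁, iprod_comm Z D₁, iprod_comm Z₁ D₁]

def IsNidsStep (W : Matrix (Fin n) (Fin n) ℝ) (α : Fin n → ℝ) (c : ℝ)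
    (g : Fin n → EuclideanSpace ℝ (Fin p) → EuclideanSpace ℝ (Fin p))
    (r : Fin n → (Fin p → ℝ) → ℝ) (d z x d₁ z₁ : Matrix (Fin n) (Fin p) ℝ) : Prop :=
  ProxMin r α z x ∧
    d₁ = d + c • ((1 - W) * ((2 : ℝ) • x - z - diagonal α * gradS g x - diagonal α * d)) ∧
    z₁ = x - diagonal α * gradS g x - diagonal α * d₁

namespace IsNidsStep

variable {d z x d₁ z₁ d' z' x' d₁' z₁' : Matrix (Fin n) (Fin p) ℝ}

theorem inRange (h : IsNidsStep W α c g r d z x d₁ z₁) (hd : InRange (1 - W) d) :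
    InRange (1 - W) d₁ := by
  rw [h.2.1, ← Matrix.mul_smul]
  exact hd.add (inRange_mul _ _)

theorem z_eq (h : IsNidsStep W α c g r d z x d₁ z₁) :
    z₁ = x - diagonal α * (gradS g x + d₁) := by
  rw [h.2.2, Matrix.mul_add]
  abel

theorem d_sub_eq (h : IsNidsStep W α c g r d z x d₁ z₁) :
    d₁ - d = c • ((1 - W) * ((x - z + z₁) + diagonal α * (d₁ - d))) := by
  have ht : (2 : ℝ) • x - z - diagonal α * gradS g x - diagonal α * d
      = (x - z + z₁) + diagonal α * (d₁ - d) := by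
    rw [h.2.2, Matrix.mul_sub]
    module
  rw [← ht, h.2.1, add_sub_cancel_left]

theorem contraction (hS : (1 - W)ᵀ = 1 - W) (hSBS : (1 - W) * B * (1 - W) = 1 - W)
    (hα : ∀ i, 0 < α i) (hL : ∀ i, 0 < L i) (hc : c ≠ 0)
    (hs : ∀ i, ConvexOn ℝ Set.univ (s i)) (hg : ∀ i v, HasGradientAt (s i) (g i v) v)
    (hlip : ∀ i (v w : EuclideanSpace ℝ (Fin p)), ‖g i v - g i w‖ ≤ L i * ‖v - w‖)
    (hr : ∀ i, ConvexOn ℝ Set.univ (r i))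
    (h : IsNidsStep W α c g r d z x d₁ z₁) (h' : IsNidsStep W α c g r d' z' x' d₁' z₁')
    (hD : InRange (1 - W) (d - d')) (hD₁ : InRange (1 - W) (d₁ - d₁')) :
    nsq (diagonal fun i => (α i)⁻¹) (z₁ - z₁') + nsq (c⁻¹ • B - diagonal α) (d₁ - d₁')
        + nsq (c⁻¹ • B - diagonal α) ((d - d') - (d₁ - d₁'))
        + nsq (diagonal fun i => (α i)⁻¹ - L i / 2) ((z - z') - (z₁ - z₁'))
      ≤ nsq (diagonal fun i => (α i)⁻¹) (z - z') + nsq (c⁻¹ • B - diagonal α) (d - d') := by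
  have hZ : z - z'
      = (x - x') + diagonal α * ((diagonal fun i => (α i)⁻¹) * ((z - z') - (x - x'))) := by
    rw [← Matrix.mul_assoc, diagonal_mul_diagonal_inv fun i => (hα i).ne', Matrix.one_mul]
    abel
  have hZ₁ : z₁ - z₁' = (x - x') - diagonal α * ((gradS g x - gradS g x') + (d₁ - d₁')) := by
    rw [h.z_eq, h'.z_eq]
    simp only [Matrix.mul_add, Matrix.mul_sub]
    abel
  have hΔ : (d₁ - d₁') - (d - d') = c • ((1 - W) * (((x - x') - (z - z') + (z₁ - z₁'))
      + diagonal α * ((d₁ - d₁') - (d - d')))) := by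
    calc (d₁ - d₁') - (d - d') = (d₁ - d) - (d₁' - d') := by abel
      _ = _ := congrArg₂ (· - ·) h.d_sub_eq h'.d_sub_eq
      _ = _ := by
        rw [← smul_sub, ← Matrix.mul_sub]
        congr 2
        simp only [Matrix.mul_sub]
        abel
  have hmono : 0 ≤ iprod (x - x') ((diagonal fun i => (α i)⁻¹) * ((z - z') - (x - x'))) := by
    have := (h.1.isSubgrad hr).iprod_sub_nonneg (h'.1.isSubgrad hr)
    rwa [← Matrix.mul_sub, show z - x - (z' - x') = (z - z') - (x - x') by abel,
      iprod_comm] at this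
  have hid := nsq_energy_identity (diagonal_transpose α) (diagonal_transpose _)
    (diagonal_inv_mul_diagonal fun i => (hα i).ne') hZ hZ₁
    ((hD.sub hD₁).iprod_metric_comm hS hSBS hD₁) (hD₁.iprod_metric_of_eq hS hSBS hc hΔ)
  have hcoco := two_iprod_gradS_sub_le hs hg hL hlip x x' ((z - z') - (z₁ - z₁'))
  have hsplit : nsq (diagonal fun i => (α i)⁻¹) ((z - z') - (z₁ - z₁'))
      = nsq (diagonal fun i => (α i)⁻¹ - L i / 2) ((z - z') - (z₁ - z₁'))
        + nsq (diagonal fun i => L i / 2) ((z - z') - (z₁ - z₁')) := by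
    rw [← diagonal_sub, nsq_sub_left]
    ring
  linarith

theorem tendsto_succ_mul_residual (hS : (1 - W)ᵀ = 1 - W) (hSpsd : (1 - W).PosSemidef)
    (hSBS : (1 - W) * B * (1 - W) = 1 - W) (hα : ∀ i, 0 < α i) (hL : ∀ i, 0 < L i)
    (hαL : ∀ i, α i < 2 / L i) (hc : 0 < c)
    (hcW : ((1 : Matrix (Fin n) (Fin n) ℝ) - c • ((diagonal fun i => Real.sqrt (α i)) *
      (1 - W) * diagonal fun i => Real.sqrt (α i))).PosSemidef)
    (hs : ∀ i, ConvexOn ℝ Set.univ (s i)) (hg : ∀ i v, HasGradientAt (s i) (g i v) v)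
    (hlip : ∀ i (v w : EuclideanSpace ℝ (Fin p)), ‖g i v - g i w‖ ≤ L i * ‖v - w‖)
    (hr : ∀ i, ConvexOn ℝ Set.univ (r i)) {x d z : ℕ → Matrix (Fin n) (Fin p) ℝ}
    {xstar dstar zstar : Matrix (Fin n) (Fin p) ℝ}
    (hstep : ∀ k, IsNidsStep W α c g r (d k) (z k) (x k) (d (k + 1)) (z (k + 1)))
    (hfix : IsNidsStep W α c g r dstar zstar xstar dstar zstar)
    (hd₀ : InRange (1 - W) (d 0)) (hdstar : InRange (1 - W) dstar) :
    Tendsto (fun k : ℕ => ((k : ℝ) + 1) *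
      (nsq (diagonal fun i => (α i)⁻¹) (z k - z (k + 1)) +
        nsq (c⁻¹ • B - diagonal α) (d k - d (k + 1)))) atTop (𝓝 0) := by
  set Λi : Matrix (Fin n) (Fin n) ℝ := diagonal fun i => (α i)⁻¹
  set Γ : Matrix (Fin n) (Fin n) ℝ := diagonal fun i => (α i)⁻¹ - L i / 2
  set M := c⁻¹ • B - diagonal α
  have hrange : ∀ k, InRange (1 - W) (d k) := fun k =>
    Nat.rec hd₀ (fun k ih => (hstep k).inRange ih) k
  have hγ : ∀ i, 0 < (α i)⁻¹ - L i / 2 := fun i => by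
    have := inv_strictAnti₀ (hα i) (hαL i)
    rw [inv_div] at this
    linarith
  have hM : ∀ {e : Matrix (Fin n) (Fin p) ℝ}, InRange (1 - W) e → 0 ≤ nsq M e := fun he =>
    he.nsq_metric_nonneg hS hSpsd hSBS hα hc hcW
  have hΓ : ∀ e : Matrix (Fin n) (Fin p) ℝ, 0 ≤ nsq Γ e := nsq_diagonal_nonneg fun i => (hγ i).le
  have hΛi : ∀ e : Matrix (Fin n) (Fin p) ℝ, 0 ≤ nsq Λi e :=
    nsq_diagonal_nonneg fun i => (inv_pos.2 (hα i)).le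
  have hfejer : ∀ k, nsq M (d k - d (k + 1)) + nsq Γ (z k - z (k + 1))
      ≤ (nsq Λi (z k - zstar) + nsq M (d k - dstar))
        - (nsq Λi (z (k + 1) - zstar) + nsq M (d (k + 1) - dstar)) := fun k => by
    have := (hstep k).contraction hS hSBS hα hL hc.ne' hs hg hlip hr hfix
      ((hrange k).sub hdstar) ((hrange (k + 1)).sub hdstar)
    simp only [sub_sub_sub_cancel_right] at this
    linarith
  have hanti : ∀ k, nsq Λi (z (k + 1) - z (k + 1 + 1)) + nsq M (d (k + 1) - d (k + 1 + 1))
      ≤ nsq Λi (z k - z (k + 1)) + nsq M (d k - d (k + 1)) := fun k => by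
    have hΔ := (hrange k).sub (hrange (k + 1))
    have hΔ₁ := (hrange (k + 1)).sub (hrange (k + 1 + 1))
    have := (hstep k).contraction hS hSBS hα hL hc.ne' hs hg hlip hr (hstep (k + 1)) hΔ hΔ₁
    linarith [hM (hΔ.sub hΔ₁), hΓ ((z k - z (k + 1)) - (z (k + 1) - z (k + 1 + 1)))]
  have hdecr : Summable fun k => nsq M (d k - d (k + 1)) + nsq Γ (z k - z (k + 1)) :=
    summable_of_le_sub_succ (fun k => add_nonneg (hM ((hrange k).sub (hrange (k + 1)))) (hΓ _))
      (fun k => add_nonneg (hΛi _) (hM ((hrange k).sub hdstar))) hfejer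
  obtain ⟨C, hC⟩ := exists_nsq_diagonal_le_mul (p := p) (fun i => (α i)⁻¹) hγ
  have hres : ∀ k, nsq Λi (z k - z (k + 1)) + nsq M (d k - d (k + 1))
      ≤ max C 1 * (nsq M (d k - d (k + 1)) + nsq Γ (z k - z (k + 1))) := fun k => by
    have h₁ := mul_le_mul_of_nonneg_right (le_max_left C 1) (hΓ (z k - z (k + 1)))
    have h₂ := le_mul_of_one_le_left (hM ((hrange k).sub (hrange (k + 1)))) (le_max_right C 1)
    linarith [hC (z k - z (k + 1))]
  have hnonneg : ∀ k, 0 ≤ nsq Λi (z k - z (k + 1)) + nsq M (d k - d (k + 1)) := fun k =>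
    add_nonneg (hΛi _) (hM ((hrange k).sub (hrange (k + 1))))
  exact tendsto_succ_mul_of_antitone_of_summable hnonneg (antitone_nat_of_succ_le hanti)
    ((hdecr.mul_left (max C 1)).of_nonneg_of_le hnonneg hres)

end IsNidsStep

end NIDS

theorem nids_little_o_rate_general
    {n p : ℕ}
    (W : Matrix (Fin n) (Fin n) ℝ) (hW : IsMixing W)
    (α L : Fin n → ℝ) (hα : ∀ i, 0 < α i) (hL : ∀ i, 0 < L i)
    (c : ℝ) (hc : 0 < c)
    (hcW : ((1 : Matrix (Fin n) (Fin n) ℝ) -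
      c • ((Matrix.diagonal fun i => Real.sqrt (α i)) * (1 - W) *
        Matrix.diagonal fun i => Real.sqrt (α i))).PosDef)
    (B : Matrix (Fin n) (Fin n) ℝ) (hB : IsMoorePenrose (1 - W) B)
    (s : Fin n → EuclideanSpace ℝ (Fin p) → ℝ)
    (g : Fin n → EuclideanSpace ℝ (Fin p) → EuclideanSpace ℝ (Fin p))
    (hs : ∀ i, ConvexOn ℝ Set.univ (s i))
    (hg : ∀ i v, HasGradientAt (s i) (g i v) v)
    (hlip : ∀ i (v w : EuclideanSpace ℝ (Fin p)), ‖g i v - g i w‖ ≤ L i * ‖v - w‖)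
    (r : Fin n → (Fin p → ℝ) → ℝ) (hr : ∀ i, ConvexOn ℝ Set.univ (r i))
    (hss : ∀ i, α i < 2 / L i)
    (x d z : ℕ → Matrix (Fin n) (Fin p) ℝ)
    (hx : ∀ k, 1 ≤ k → ProxMin r α (z k) (x k))
    (hdu : ∀ k, 1 ≤ k → d (k + 1) = d k + c • ((1 - W) *
      ((2 : ℝ) • x k - z k - Matrix.diagonal α * gradS g (x k) - Matrix.diagonal α * d k)))
    (hzu : ∀ k, 1 ≤ k → z (k + 1) =
      x k - Matrix.diagonal α * gradS g (x k) - Matrix.diagonal α * d (k + 1))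
    (hd1 : InRange (1 - W) (d 1))
    (dstar zstar xstar : Matrix (Fin n) (Fin p) ℝ)
    (hxstar : ProxMin r α zstar xstar)
    (hfix1 : dstar = dstar + c • ((1 - W) * ((2 : ℝ) • xstar - zstar -
      Matrix.diagonal α * gradS g xstar - Matrix.diagonal α * dstar)))
    (hfix2 : zstar = xstar - Matrix.diagonal α * gradS g xstar - Matrix.diagonal α * dstar)
    (hdstar : InRange (1 - W) dstar) :
    Tendsto (fun k : ℕ => (k : ℝ) *
      (nsq (Matrix.diagonal fun i => (α i)⁻¹) (z k - z (k + 1)) +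
        nsq (c⁻¹ • B - Matrix.diagonal α) (d k - d (k + 1)))) atTop (𝓝 0) := by
  obtain ⟨hWt, -, -, hWpsd⟩ := hW
  have hS : (1 - W)ᵀ = 1 - W := by rw [transpose_sub, transpose_one, hWt]
  have hSpsd : (1 - W).PosSemidef := by
    convert hWpsd using 1
    module
  have hshift := IsNidsStep.tendsto_succ_mul_residual (x := fun k => x (k + 1))
    (d := fun k => d (k + 1)) (z := fun k => z (k + 1)) hS hSpsd hB.1 hα hL hss hc
    hcW.posSemidef hs hg hlip hr
    (fun k => ⟨hx _ (Nat.le_add_left 1 k), hdu _ (Nat.le_add_left 1 k),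
      hzu _ (Nat.le_add_left 1 k)⟩) ⟨hxstar, hfix1, hfix2⟩ hd1 hdstar
  rw [← tendsto_add_atTop_iff_nat 1]
  simpa only [Nat.cast_add, Nat.cast_one] using hshift

/-- Theorem 3.8 (o(1/k) rate). -/
theorem nids_little_o_rate
    {n p : ℕ} (hn : 0 < n)
    (W : Matrix (Fin n) (Fin n) ℝ) (hW : IsMixing W)
    (α L : Fin n → ℝ) (hα : ∀ i, 0 < α i) (hL : ∀ i, 0 < L i)
    (c : ℝ) (hc : 0 < c)
    (hcW : ((1 : Matrix (Fin n) (Fin n) ℝ) -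
      c • ((Matrix.diagonal fun i => Real.sqrt (α i)) * (1 - W) *
        Matrix.diagonal fun i => Real.sqrt (α i))).PosDef)
    (B : Matrix (Fin n) (Fin n) ℝ) (hB : IsMoorePenrose (1 - W) B)
    (s : Fin n → EuclideanSpace ℝ (Fin p) → ℝ)
    (g : Fin n → EuclideanSpace ℝ (Fin p) → EuclideanSpace ℝ (Fin p))
    (hs : ∀ i, ConvexOn ℝ Set.univ (s i))
    (hg : ∀ i v, HasGradientAt (s i) (g i v) v)
    (hlip : ∀ i (v w : EuclideanSpace ℝ (Fin p)), ‖g i v - g i w‖ ≤ L i * ‖v - w‖)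
    (r : Fin n → (Fin p → ℝ) → ℝ) (hr : ∀ i, ConvexOn ℝ Set.univ (r i))
    (hss : ∀ i, α i < 2 / L i)
    (x d z : ℕ → Matrix (Fin n) (Fin p) ℝ)
    (hx : ∀ k, 1 ≤ k → ProxMin r α (z k) (x k))
    (hdu : ∀ k, 1 ≤ k → d (k + 1) = d k + c • ((1 - W) *
      ((2 : ℝ) • x k - z k - Matrix.diagonal α * gradS g (x k) - Matrix.diagonal α * d k)))
    (hzu : ∀ k, 1 ≤ k → z (k + 1) =
      x k - Matrix.diagonal α * gradS g (x k) - Matrix.diagonal α * d (k + 1))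
    (hd1 : InRange (1 - W) (d 1))
    (dstar zstar xstar : Matrix (Fin n) (Fin p) ℝ)
    (hxstar : ProxMin r α zstar xstar)
    (hfix1 : dstar = dstar + c • ((1 - W) * ((2 : ℝ) • xstar - zstar -
      Matrix.diagonal α * gradS g xstar - Matrix.diagonal α * dstar)))
    (hfix2 : zstar = xstar - Matrix.diagonal α * gradS g xstar - Matrix.diagonal α * dstar)
    (hdstar : InRange (1 - W) dstar) :
    Tendsto (fun k : ℕ => (k : ℝ) *
      (nsq (Matrix.diagonal fun i => (α i)⁻¹) (z k - z (k + 1)) +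
        nsq (c⁻¹ • B - Matrix.diagonal α) (d k - d (k + 1)))) atTop (𝓝 0) :=
  nids_little_o_rate_general W hW α L hα hL c hc hcW B hB s g hs hg hlip r hr hss x d z hx hdu hzu
    hd1 dstar zstar xstar hxstar hfix1 hfix2 hdstar
end

section
/- (Proposition, M defines a norm on range(I − W).) Let M = c⁻¹(I − W)† − Λ. Then for every nonzero x ∈ range(I − W) (i.e., x = (I − W)y for some y ∈ ℝ^{n×p} and x ≠ 0), tr(xᵀ M x) > 0; consequently x ↦ √tr(xᵀ M x) is a norm on the subspace range(I − W) ⊆ ℝ^{n×p}. -/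
/-!
Write `S = Λ^{1/2}`, `A = I - W` and `G = c S A S`. For `x = A y` the pseudoinverse identity
`A B A = A` gives `c² · tr(xᵀ M x) = tr(zᵀ (G - G²) z)` with `z = S⁻¹ y`, and the hypotheses say
`0 ≼ G ≺ I`. Then `G - G² = (I - G) G (I - G) + G (I - G) G` is a sum of a positive semidefinite
form and a form that is positive on every `z` with `G z ≠ 0`; and `G z = c S x ≠ 0`.
-/

open Matrix Filter Topology

section iprodQ

variable {n p : ℕ}

lemma iprodQ_add_left (Q₁ Q₂ : Matrix (Fin n) (Fin n) ℝ) (x y : Matrix (Fin n) (Fin p) ℝ) :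
    iprodQ (Q₁ + Q₂) x y = iprodQ Q₁ x y + iprodQ Q₂ x y := by
  simp only [iprodQ, Matrix.mul_add, Matrix.add_mul, trace_add]

lemma iprodQ_smul_left (a : ℝ) (Q : Matrix (Fin n) (Fin n) ℝ) (x y : Matrix (Fin n) (Fin p) ℝ) :
    iprodQ (a • Q) x y = a * iprodQ Q x y := by
  rw [iprodQ, iprodQ, Matrix.mul_smul, Matrix.smul_mul, trace_smul, smul_eq_mul]

lemma iprodQ_mul_mul (Q P : Matrix (Fin n) (Fin n) ℝ) (x y : Matrix (Fin n) (Fin p) ℝ) :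
    iprodQ Q (P * x) (P * y) = iprodQ (Pᵀ * Q * P) x y := by
  simp only [iprodQ, transpose_mul, Matrix.mul_assoc]

lemma iprodQ_self_eq_sum (Q : Matrix (Fin n) (Fin n) ℝ) (x : Matrix (Fin n) (Fin p) ℝ) :
    iprodQ Q x x = ∑ j, xᵀ j ⬝ᵥ Q *ᵥ xᵀ j := by
  simp only [iprodQ, trace, diag, mul_apply', dotProduct_mulVec]
  rfl

lemma iprodQ_self_nonneg {Q : Matrix (Fin n) (Fin n) ℝ} (hQ : Q.PosSemidef)
    (x : Matrix (Fin n) (Fin p) ℝ) : 0 ≤ iprodQ Q x x := by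
  rw [iprodQ_self_eq_sum]
  exact Finset.sum_nonneg fun j _ => by simpa using hQ.dotProduct_mulVec_nonneg (xᵀ j)

lemma iprodQ_self_pos {Q : Matrix (Fin n) (Fin n) ℝ} (hQ : Q.PosDef)
    {x : Matrix (Fin n) (Fin p) ℝ} (hx : x ≠ 0) : 0 < iprodQ Q x x := by
  obtain ⟨j, hj⟩ : ∃ j, xᵀ j ≠ 0 := by
    by_contra! h
    exact hx (by simpa using congrArg transpose (funext h : xᵀ = 0))
  rw [iprodQ_self_eq_sum]
  refine Finset.sum_pos' (fun j _ => ?_) ⟨j, Finset.mem_univ _, ?_⟩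
  · simpa using hQ.posSemidef.dotProduct_mulVec_nonneg (xᵀ j)
  · simpa using hQ.dotProduct_mulVec_pos hj

lemma iprodQ_sub_mul_self_pos {G : Matrix (Fin n) (Fin n) ℝ} (hG : G.PosSemidef)
    (hG1 : (1 - G).PosDef) {z : Matrix (Fin n) (Fin p) ℝ} (hz : G * z ≠ 0) :
    0 < iprodQ (G - G * G) z z := by
  have hGT : Gᵀ = G := by simpa using hG.isHermitian.eq
  have hG1T : (1 - G)ᵀ = 1 - G := by rw [transpose_sub, transpose_one, hGT]
  have hsplit : G - G * G = (1 - G)ᵀ * G * (1 - G) + Gᵀ * (1 - G) * G := by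
    rw [hGT, hG1T]; noncomm_ring
  rw [hsplit, iprodQ_add_left, ← iprodQ_mul_mul, ← iprodQ_mul_mul]
  exact add_pos_of_nonneg_of_pos (iprodQ_self_nonneg hG _) (iprodQ_self_pos hG1 hz)

end iprodQ

lemma transpose_mul_pinv_sub_mul {m : Type*} [Fintype m] {A B S : Matrix m m ℝ}
    (hABA : A * B * A = A) (hA : Aᵀ = A) (hS : Sᵀ = S) {c : ℝ} (hc : c ≠ 0) :
    c ^ 2 • ((A * S)ᵀ * (c⁻¹ • B - S * S) * (A * S)) =
      c • (S * A * S) - c • (S * A * S) * (c • (S * A * S)) := by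
  have hSABAS : S * A * B * A * S = S * A * S := by
    rw [Matrix.mul_assoc S A B, Matrix.mul_assoc S, hABA]
  simp only [transpose_mul, hA, hS, Matrix.mul_sub, Matrix.sub_mul, Matrix.mul_smul,
    Matrix.smul_mul, smul_sub, smul_smul, ← Matrix.mul_assoc, hSABAS]
  rw [sq, mul_assoc, mul_inv_cancel₀ hc, mul_one]

/-- The matrix `M = c⁻¹(I − W)† − Λ` defines a norm on `range(I − W)`. -/
theorem M_defines_norm_on_range
    {n p : ℕ}
    (W : Matrix (Fin n) (Fin n) ℝ) (hW : IsMixing W)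
    (α : Fin n → ℝ) (hα : ∀ i, 0 < α i) (c : ℝ) (hc : 0 < c)
    (hcW : ((1 : Matrix (Fin n) (Fin n) ℝ) -
      c • ((Matrix.diagonal fun i => Real.sqrt (α i)) * (1 - W) *
        Matrix.diagonal fun i => Real.sqrt (α i))).PosDef)
    (B : Matrix (Fin n) (Fin n) ℝ) (hB : IsMoorePenrose (1 - W) B) :
    ∀ x : Matrix (Fin n) (Fin p) ℝ, InRange (1 - W) x → x ≠ 0 →
      0 < iprodQ (c⁻¹ • B - Matrix.diagonal α) x x := by
  rintro x ⟨y, rfl⟩ hx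
  obtain ⟨hWT, -, -, hW2⟩ := hW
  set S := diagonal fun i => √(α i)
  set T := diagonal fun i => (√(α i))⁻¹
  set A : Matrix (Fin n) (Fin n) ℝ := 1 - W
  set G := c • (S * A * S)
  have hST : S * T = 1 := by
    rw [diagonal_mul_diagonal, ← diagonal_one]
    exact congrArg _ (funext fun i => mul_inv_cancel₀ (Real.sqrt_pos.2 (hα i)).ne')
  have hTS : T * S = 1 := by
    rw [diagonal_mul_diagonal, ← diagonal_one]
    exact congrArg _ (funext fun i => inv_mul_cancel₀ (Real.sqrt_pos.2 (hα i)).ne')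
  have hSS : S * S = diagonal α := by
    rw [diagonal_mul_diagonal]
    exact congrArg _ (funext fun i => Real.mul_self_sqrt (hα i).le)
  have hAT : Aᵀ = A := by rw [transpose_sub, transpose_one, hWT]
  have hA : A.PosSemidef := by
    rwa [two_smul, add_comm W, add_sub_add_left_eq_sub] at hW2
  have hG : G.PosSemidef := by
    have := (hA.conjTranspose_mul_mul_same S).smul hc.le
    rwa [conjTranspose_eq_transpose_of_trivial, diagonal_transpose] at this
  have hGz : G * (T * y) ≠ 0 := by
    intro h
    have hSx : S * (A * y) = 0 := by
      rwa [Matrix.smul_mul, smul_eq_zero_iff_right hc.ne', Matrix.mul_assoc, ← Matrix.mul_assoc S,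
        hST, Matrix.one_mul, Matrix.mul_assoc] at h
    exact hx (by rw [← Matrix.one_mul (A * y), ← hTS, Matrix.mul_assoc, hSx, Matrix.mul_zero])
  have hy : A * y = A * S * (T * y) := by
    rw [Matrix.mul_assoc, ← Matrix.mul_assoc S, hST, Matrix.one_mul]
  have hM := transpose_mul_pinv_sub_mul hB.1 hAT (S := S) (diagonal_transpose _) hc.ne'
  rw [hSS] at hM
  have key := iprodQ_sub_mul_self_pos hG hcW hGz
  rw [← hM, iprodQ_smul_left, ← iprodQ_mul_mul, ← hy] at key
  exact pos_of_mul_pos_right key (sq_nonneg c)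
end
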